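/- Let n be a nonnegative integer and let a, c be complex numbers with (a)_n ≠ 0, (c)_n ≠ 0, (c−a−n)_{⌊n/2⌋} ≠ 0, and (1+a−c)_{⌊n/2⌋} ≠ 0. Then _3F_2(−n, a/2, (a+1)/2 ; a, c ; 4) = [(−1)^n (1+a−c)_n / (c)_n] · _3F_2(−n/2, (1−n)/2, 1−c−n ; c−a−n, 1+a−c ; 4), where the series on the right terminates because one of the numerator parameters −n/2 and (1−n)/2 is a nonpositive integer: it equals the finite sum Σ_{k=0}^{⌊n/2⌋} [(−n/2)_k ((1−n)/2)_k (1−c−n)_k / (k! (c−a−n)_k (1+a−c)_k)] 4^k. -/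

import Mathlib

/-!
After multiplying by `(c)_n / n!`, both sides become sums of products of generalized binomial
coefficients `C(x, k) = Ring.choose x k`: the left side is
`∑ₖ (-1)^k C(a+2k-1, k) C(c+n-1, n-k)` and the right side
`(-1)^n ∑ⱼ C(c+n-1, j) C(a-c+n-j, n-2j)`. Chu–Vandermonde applied to
`a+2k-1 = (a-c+k) + (c+k-1)`, followed by an exchange of summations, reduces the left side to
alternating sums `∑ₘ (-1)^m C(N, m) C(x+m, i)`. These are `N`-th forward differences of
`C(·, i)`, equal to `(-1)^N C(x, i-N)` when `N ≤ i` and to `0` otherwise, and what survives is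
the right side with `j = N`.
-/

open Finset

/-- The rising factorial (Pochhammer symbol) `(a)_k = a(a+1)⋯(a+k-1)`. -/
noncomputable def poch (a : ℂ) (k : ℕ) : ℂ := ∏ i ∈ Finset.range k, (a + i)

open Polynomial fwdDiff

theorem sum_range_neg_one_pow_mul_choose_mul {R : Type*} [CommRing R] (f : R → R) (x : R)
    (N : ℕ) :
    ∑ m ∈ range (N + 1), (-1) ^ m * (N.choose m : R) * f (x + m) =
      (-1) ^ N * (Δ_[1])^[N] f x := by
  rw [fwdDiff_iter_eq_sum_shift, mul_sum]
  refine sum_congr rfl fun m hm => ?_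
  have hmN : m ≤ N := Nat.lt_succ_iff.mp (mem_range.mp hm)
  rw [zsmul_eq_mul, nsmul_one]
  have hsign : (-1 : R) ^ m = (-1) ^ N * (-1) ^ (N - m) := by
    rw [← pow_add, show N + (N - m) = m + 2 * (N - m) by omega, pow_add, pow_mul]
    simp
  push_cast
  rw [hsign]
  ring

namespace Ring

variable {R : Type*} [CommRing R] [BinomialRing R]

theorem fwdDiff_choose_succ (j : ℕ) :
    Δ_[1] (fun x : R ↦ choose x (j + 1)) = fun x ↦ choose x j := by
  ext x
  simp [fwdDiff, choose_succ_succ]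

theorem fwdDiff_iter_choose (j k : ℕ) :
    (Δ_[1])^[k] (fun x : R ↦ choose x (k + j)) = fun x ↦ choose x j := by
  induction k generalizing j with
  | zero => simp
  | succ k ih =>
    rw [Function.iterate_succ_apply', show k + 1 + j = k + (j + 1) by omega, ih,
      fwdDiff_choose_succ]

theorem fwdDiff_iter_choose_of_lt {j k : ℕ} (h : j < k) :
    (Δ_[1])^[k] (fun x : R ↦ choose x j) = 0 := by
  obtain ⟨t, rfl⟩ := Nat.exists_eq_add_of_lt h
  have hj := fwdDiff_iter_choose (R := R) 0 j
  simp only [add_zero, choose_zero_right] at hj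
  rw [show j + t + 1 = t + 1 + j by omega, Function.iterate_add_apply, hj,
    Function.iterate_succ_apply, fwdDiff_const]
  exact Function.iterate_fixed (fwdDiff_const 1 0) t

theorem sum_range_neg_one_pow_mul_choose_mul_choose_add (x : R) (N j : ℕ) :
    ∑ m ∈ range (N + 1), (-1) ^ m * (N.choose m : R) * choose (x + m) j =
      if N ≤ j then (-1) ^ N * choose x (j - N) else 0 := by
  rw [sum_range_neg_one_pow_mul_choose_mul (fun y ↦ choose y j)]
  split_ifs with h
  · obtain ⟨i, rfl⟩ := Nat.exists_eq_add_of_le h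
    rw [fwdDiff_iter_choose, Nat.add_sub_cancel_left]
  · rw [fwdDiff_iter_choose_of_lt (not_le.mp h), Pi.zero_apply, mul_zero]

theorem choose_two_mul_sub_one_mul_choose_eq_sum {k n : ℕ} (hkn : k ≤ n) (a c : R) :
    choose (a + 2 * k - 1) k * choose (c + n - 1) (n - k) =
      ∑ i ∈ range (k + 1), ((n - i).choose (k - i) : R) * choose (a - c + k) i *
        choose (c + n - 1) (n - i) := by
  rw [show a + 2 * k - 1 = (a - c + k) + (c + k - 1) by ring, add_choose_eq _ (Commute.all _ _),
    Nat.sum_antidiagonal_eq_sum_range_succ_mk, sum_mul]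
  refine sum_congr rfl fun i hi => ?_
  have hik : i ≤ k := Nat.lt_succ_iff.mp (mem_range.mp hi)
  have habsorb := choose_smul_choose (c + n - 1) (show n - k ≤ n - i by omega)
  rw [Nat.choose_symm_of_eq_add (show n - i = (n - k) + (k - i) by omega),
    show n - i - (n - k) = k - i by omega, Nat.cast_sub hkn,
    show c + n - 1 - (n - k) = c + k - 1 by ring, nsmul_eq_mul] at habsorb
  rw [mul_assoc, mul_comm (choose (c + k - 1) (k - i)), ← habsorb]
  ring

theorem sum_neg_one_pow_mul_choose_two_mul_sub_one_mul_choose (a c : R) (n : ℕ) :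
    ∑ k ∈ range (n + 1), (-1) ^ k * (choose (a + 2 * k - 1) k * choose (c + n - 1) (n - k)) =
      (-1) ^ n * ∑ j ∈ range (n / 2 + 1),
        choose (c + n - 1) j * choose (a - c + n - j) (n - 2 * j) := by
  set y := c + n - 1
  calc _ = ∑ k ∈ range (n + 1), ∑ i ∈ range (k + 1),
        (-1) ^ k * (((n - i).choose (k - i) : R) * choose (a - c + k) i * choose y (n - i)) := by
        refine sum_congr rfl fun k hk => ?_
        rw [choose_two_mul_sub_one_mul_choose_eq_sum (Nat.lt_succ_iff.mp (mem_range.mp hk)),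
          mul_sum]
    _ = ∑ i ∈ range (n + 1), (-1) ^ i * choose y (n - i) * ∑ m ∈ range (n - i + 1),
        (-1) ^ m * ((n - i).choose m : R) * choose (a - c + i + m) i := by
        conv_lhs => simp only [range_eq_Ico]
        rw [← sum_Ico_Ico_comm, ← range_eq_Ico]
        refine sum_congr rfl fun i hi => ?_
        have hin : i ≤ n := Nat.lt_succ_iff.mp (mem_range.mp hi)
        rw [sum_Ico_eq_sum_range, show n + 1 - i = n - i + 1 by omega, mul_sum]
        refine sum_congr rfl fun m _ => ?_
        push_cast
        rw [Nat.add_sub_cancel_left, pow_add, ← add_assoc]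
        ring
    _ = ∑ j ∈ range (n + 1), (-1) ^ n *
          if 2 * j ≤ n then choose y j * choose (a - c + n - j) (n - 2 * j) else 0 := by
        rw [← sum_range_reflect]
        refine sum_congr rfl fun j hj => ?_
        have hjn : j ≤ n := Nat.lt_succ_iff.mp (mem_range.mp hj)
        rw [show n + 1 - 1 - j = n - j by omega, show n - (n - j) = j by omega,
          sum_range_neg_one_pow_mul_choose_mul_choose_add]
        by_cases h : 2 * j ≤ n
        · rw [if_pos (by omega), if_pos h, show n - j - j = n - 2 * j by omega,
            Nat.cast_sub hjn, show a - c + (n - j : R) = a - c + n - j by ring,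
            ← pow_sub_mul_pow (-1 : R) hjn]
          ring
        · rw [if_neg (by omega), if_neg h]
          simp
    _ = _ := by
        rw [← mul_sum, ← sum_filter]
        congr 2
        ext j
        simp only [mem_filter, mem_range]
        omega

end Ring

theorem poch_succ (x : ℂ) (k : ℕ) : poch x (k + 1) = poch x k * (x + k) :=
  prod_range_succ _ k

theorem poch_eq_eval_ascPochhammer (x : ℂ) (k : ℕ) :
    poch x k = (ascPochhammer ℂ k).eval x := by
  induction k with
  | zero => simp [poch]
  | succ k ih => rw [poch_succ, ascPochhammer_succ_eval, ih]

theorem poch_add (x : ℂ) (p q : ℕ) : poch x (p + q) = poch x p * poch (x + p) q := by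
  simp only [poch, prod_range_add, Nat.cast_add, add_assoc]

theorem poch_ne_zero_of_le {x : ℂ} {k n : ℕ} (hkn : k ≤ n) (hx : poch x n ≠ 0) :
    poch x k ≠ 0 := by
  rw [← Nat.add_sub_cancel' hkn, poch_add] at hx
  exact left_ne_zero_of_mul hx

theorem poch_eq_factorial_mul_choose (x : ℂ) (k : ℕ) :
    poch x k = k.factorial * Ring.choose (x + k - 1) k := by
  rw [← nsmul_eq_mul, ← Ring.descPochhammer_eq_factorial_smul_choose,
    descPochhammer_smeval_eq_ascPochhammer, ascPochhammer_smeval_eq_eval,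
    poch_eq_eval_ascPochhammer, show x + k - 1 - k + 1 = x by ring]

theorem poch_one_sub_sub (x : ℂ) (k : ℕ) : poch (1 - x - k) k = (-1) ^ k * poch x k := by
  rw [show 1 - x - k = -(x + k - 1) by ring, poch_eq_eval_ascPochhammer,
    ascPochhammer_eval_neg_eq_descPochhammer, descPochhammer_eval_eq_ascPochhammer,
    poch_eq_eval_ascPochhammer, show x + k - 1 - k + 1 = x by ring]

theorem poch_neg_natCast (n k : ℕ) : poch (-n) k = (-1) ^ k * n.descFactorial k := by
  rw [poch_eq_eval_ascPochhammer, ascPochhammer_eval_neg_eq_descPochhammer,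
    descPochhammer_eval_eq_descFactorial]

theorem poch_two_mul (x : ℂ) (k : ℕ) :
    poch x (2 * k) = poch (x / 2) k * poch ((x + 1) / 2) k * 4 ^ k := by
  induction k with
  | zero => simp [poch]
  | succ k ih =>
    rw [show 2 * (k + 1) = 2 * k + 1 + 1 by ring, poch_succ, poch_succ, poch_succ, poch_succ, ih]
    push_cast
    ring

theorem summand_lhs_eq {n k : ℕ} (hkn : k ≤ n) {a c : ℂ} (ha : poch a k ≠ 0)
    (hc : poch c n ≠ 0) :
    (poch (-(n : ℂ)) k * poch (a / 2) k * poch ((a + 1) / 2) k) /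
        ((Nat.factorial k : ℂ) * poch a k * poch c k) * (4 : ℂ) ^ k =
      n.factorial / poch c n *
        ((-1) ^ k * (Ring.choose (a + 2 * k - 1) k * Ring.choose (c + n - 1) (n - k))) := by
  obtain ⟨m, rfl⟩ := Nat.exists_eq_add_of_le hkn
  have hck : poch c k ≠ 0 := poch_ne_zero_of_le hkn hc
  have hdup := poch_two_mul a k
  rw [two_mul k, poch_add, poch_eq_factorial_mul_choose (a + k),
    show a + k + k - 1 = a + 2 * k - 1 by ring] at hdup
  have hcn : poch c (k + m) =
      poch c k * (m.factorial * Ring.choose (c + (k + m : ℕ) - 1) m) := by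
    rw [poch_add, poch_eq_factorial_mul_choose (c + k)]
    push_cast
    ring_nf
  have hfact : ((k + m).factorial : ℂ) = m.factorial * (k + m).descFactorial k := by
    have h := Nat.factorial_mul_descFactorial hkn
    rw [Nat.add_sub_cancel_left] at h
    exact_mod_cast h.symm
  rw [Nat.add_sub_cancel_left, poch_neg_natCast, hfact, div_mul_eq_mul_div, div_mul_eq_mul_div,
    div_eq_div_iff (mul_ne_zero (mul_ne_zero (Nat.cast_ne_zero.mpr k.factorial_ne_zero) ha) hck) hc,
    hcn]
  linear_combination ((-1) ^ k * ((k + m).descFactorial k : ℂ) * poch c k * m.factorial *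
    Ring.choose (c + (k + m : ℕ) - 1) m) * hdup.symm

theorem summand_rhs_eq {n j : ℕ} (hjn : 2 * j ≤ n) {a c : ℂ}
    (hca : poch (c - a - n) j ≠ 0) (hac : poch (1 + a - c) j ≠ 0) :
    (-1 : ℂ) ^ n * poch (1 + a - c) n / poch c n *
      ((poch (-(n : ℂ) / 2) j * poch ((1 - (n : ℂ)) / 2) j * poch (1 - c - (n : ℂ)) j) /
        ((Nat.factorial j : ℂ) * poch (c - a - (n : ℂ)) j * poch (1 + a - c) j) *
          (4 : ℂ) ^ j) =
      n.factorial / poch c n * ((-1) ^ n *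
        (Ring.choose (c + n - 1) j * Ring.choose (a - c + n - j) (n - 2 * j))) := by
  obtain ⟨m, rfl⟩ := Nat.exists_eq_add_of_le hjn
  have hdup :
      poch (-((2 * j + m : ℕ) : ℂ) / 2) j * poch ((1 - ((2 * j + m : ℕ) : ℂ)) / 2) j =
      (2 * j + m).descFactorial (2 * j) / 4 ^ j := by
    have h := poch_two_mul (-((2 * j + m : ℕ) : ℂ)) j
    rw [poch_neg_natCast, pow_mul, neg_one_sq, one_pow, one_mul, neg_add_eq_sub] at h
    exact eq_div_of_mul_eq (by norm_num) h.symm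
  have hfact : ((2 * j + m).factorial : ℂ) = m.factorial * (2 * j + m).descFactorial (2 * j) := by
    have h := Nat.factorial_mul_descFactorial hjn
    rw [Nat.add_sub_cancel_left] at h
    exact_mod_cast h.symm
  have hneg : poch (1 - c - ((2 * j + m : ℕ) : ℂ)) j =
      (-1) ^ j * (j.factorial * Ring.choose (c + ((2 * j + m : ℕ) : ℂ) - 1) j) := by
    rw [show 1 - c - ((2 * j + m : ℕ) : ℂ) = 1 - (c + ((2 * j + m : ℕ) : ℂ) - j) - j by
        ring,
      poch_one_sub_sub, poch_eq_factorial_mul_choose, sub_add_cancel]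
  have hsplit : poch (1 + a - c) (2 * j + m) = poch (1 + a - c) j *
      (m.factorial * Ring.choose (a - c + ((2 * j + m : ℕ) : ℂ) - j) m) *
      ((-1) ^ j * poch (c - a - ((2 * j + m : ℕ) : ℂ)) j) := by
    rw [show poch (1 + a - c) (2 * j + m) = poch (1 + a - c) (j + m + j) by
        rw [show 2 * j + m = j + m + j by ring], poch_add, poch_add,
      poch_eq_factorial_mul_choose (1 + a - c + j) m,
      show (1 : ℂ) + a - c + j + m - 1 = a - c + ((2 * j + m : ℕ) : ℂ) - j by push_cast; ring,
      show (1 : ℂ) + a - c + ((j + m : ℕ) : ℂ) = 1 - (c - a - ((2 * j + m : ℕ) : ℂ)) - j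
        by
        push_cast; ring,
      poch_one_sub_sub]
  rw [Nat.add_sub_cancel_left, hfact, hneg, hsplit, hdup]
  have hj : (j.factorial : ℂ) ≠ 0 := Nat.cast_ne_zero.mpr j.factorial_ne_zero
  field_simp
  rw [← pow_mul, pow_mul', neg_one_sq, one_pow, mul_one]

theorem stmt_10 (n : ℕ) (a c : ℂ)
    (ha : poch a n ≠ 0) (hc : poch c n ≠ 0)
    (hca : poch (c - a - (n : ℂ)) (n / 2) ≠ 0) (hac : poch (1 + a - c) (n / 2) ≠ 0) :
    ∑ k ∈ range (n + 1),
      (poch (-(n : ℂ)) k * poch (a / 2) k * poch ((a + 1) / 2) k) /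
        ((Nat.factorial k : ℂ) * poch a k * poch c k) * (4 : ℂ) ^ k
    = (-1 : ℂ) ^ n * poch (1 + a - c) n / poch c n *
      ∑ k ∈ range (n / 2 + 1),
        (poch (-(n : ℂ) / 2) k * poch ((1 - (n : ℂ)) / 2) k * poch (1 - c - (n : ℂ)) k) /
          ((Nat.factorial k : ℂ) * poch (c - a - (n : ℂ)) k * poch (1 + a - c) k) *
          (4 : ℂ) ^ k := by
  calc _ = n.factorial / poch c n * ∑ k ∈ range (n + 1),
        (-1) ^ k * (Ring.choose (a + 2 * k - 1) k * Ring.choose (c + n - 1) (n - k)) := by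
        rw [mul_sum]
        refine sum_congr rfl fun k hk => ?_
        have hkn : k ≤ n := Nat.lt_succ_iff.mp (mem_range.mp hk)
        exact summand_lhs_eq hkn (poch_ne_zero_of_le hkn ha) hc
    _ = n.factorial / poch c n * ((-1) ^ n * ∑ j ∈ range (n / 2 + 1),
        Ring.choose (c + n - 1) j * Ring.choose (a - c + n - j) (n - 2 * j)) := by
        rw [Ring.sum_neg_one_pow_mul_choose_two_mul_sub_one_mul_choose]
    _ = _ := by
        simp only [mul_sum]
        refine sum_congr rfl fun j hj => ?_
        have hjn : j ≤ n / 2 := Nat.lt_succ_iff.mp (mem_range.mp hj)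
        exact (summand_rhs_eq (by omega) (poch_ne_zero_of_le hjn hca)
          (poch_ne_zero_of_le hjn hac)).symm
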